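/- The numbers W_n^{(-k)}(λ) of negative order -k satisfy W_n^{(-k)}(λ) = (2k)! y_2(n,k;λ), i.e., the EGF coefficients of (λe^t + λ^{-1}e^{-t} + 2)^k equal (2k)! y_2(n,k;λ). -/

import Mathlib

noncomputable def y2 (n k : ℕ) (lam : ℂ) : ℂ :=
  ((2 * k).factorial : ℂ)⁻¹ * ∑ j ∈ Finset.range (k + 1),
    (k.choose j : ℂ) * 2 ^ (k - j) *
      ∑ l ∈ Finset.range (j + 1),
        (j.choose l : ℂ) * ((2 * (l : ℤ) - j : ℤ) : ℂ) ^ n * lam ^ (2 * (l : ℤ) - j)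

/-!
Expanding `(λeᵗ + λ⁻¹e⁻ᵗ + 2)ᵏ` twice by the binomial theorem writes it as a finite linear
combination of exponentials `e^{(2l-j)t}`, whose exponential generating functions are known;
the coefficients of an entire power series are determined by its sum.
-/

open Finset Complex FormalMultilinearSeries

section PowerSeries

variable {𝕜 : Type*} [RCLike 𝕜]

theorem hasFPowerSeriesOnBall_ofScalars_of_hasSum {c : ℕ → 𝕜} {f : 𝕜 → 𝕜}
    (hc : ∀ t, HasSum (fun n => c n * t ^ n) (f t)) :
    HasFPowerSeriesOnBall f (ofScalars 𝕜 c) 0 ⊤ := by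
  have hradius : (ofScalars 𝕜 c).radius = ⊤ := by
    refine radius_eq_top_of_summable_norm _ fun r => ?_
    refine (summable_norm_iff.mpr (hc ((r : ℝ) : 𝕜)).summable).congr fun n => ?_
    simp [norm_mul, norm_pow]
  refine ⟨hradius.ge, ENNReal.zero_lt_top, fun {y} _ => ?_⟩
  simpa only [ofScalars_apply_eq, smul_eq_mul, zero_add] using hc y

theorem eq_of_hasSum_mul_pow {a b : ℕ → 𝕜} {f : 𝕜 → 𝕜}
    (ha : ∀ t, HasSum (fun n => a n * t ^ n) (f t))
    (hb : ∀ t, HasSum (fun n => b n * t ^ n) (f t)) : a = b :=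
  ofScalars_series_injective 𝕜 𝕜 <|
    (hasFPowerSeriesOnBall_ofScalars_of_hasSum ha).hasFPowerSeriesAt.eq_formalMultilinearSeries
      (hasFPowerSeriesOnBall_ofScalars_of_hasSum hb).hasFPowerSeriesAt

end PowerSeries

def HasEGF (a : ℕ → ℂ) (f : ℂ → ℂ) : Prop :=
  ∀ t, HasSum (fun n => a n * t ^ n / n.factorial) (f t)

namespace HasEGF

variable {a b : ℕ → ℂ} {f : ℂ → ℂ}

theorem unique (ha : HasEGF a f) (hb : HasEGF b f) : a = b := by
  have hdiv : (fun n => a n / n.factorial) = fun n => b n / n.factorial :=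
    eq_of_hasSum_mul_pow (f := f) (fun t => (ha t).congr_fun fun n => by ring)
      (fun t => (hb t).congr_fun fun n => by ring)
  funext n
  have hn : (n.factorial : ℂ) ≠ 0 := by exact_mod_cast n.factorial_ne_zero
  exact (div_left_inj' hn).mp (congrFun hdiv n)

theorem const_mul (c : ℂ) (ha : HasEGF a f) : HasEGF (fun n => c * a n) (fun t => c * f t) :=
  fun t => ((ha t).mul_left c).congr_fun fun n => by ring

theorem sum {ι : Type*} (s : Finset ι) {a : ι → ℕ → ℂ} {f : ι → ℂ → ℂ}
    (h : ∀ i ∈ s, HasEGF (a i) (f i)) :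
    HasEGF (fun n => ∑ i ∈ s, a i n) (fun t => ∑ i ∈ s, f i t) :=
  fun t => (hasSum_sum fun i hi => h i hi t).congr_fun fun n => by
    rw [Finset.sum_mul, Finset.sum_div]

end HasEGF

theorem hasEGF_pow_exp_mul (m : ℂ) : HasEGF (fun n => m ^ n) (fun t => exp (m * t)) := by
  intro t
  have h := NormedSpace.expSeries_div_hasSum_exp (m * t)
  rw [← Complex.exp_eq_exp_ℂ] at h
  exact h.congr_fun fun n => by rw [mul_pow]

section Lambda

variable {lam : ℂ}

theorem mul_exp_pow_mul_inv_mul_exp_neg_pow (hlam : lam ≠ 0) (t : ℂ) {j l : ℕ} (hl : l ≤ j) :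
    (lam * exp t) ^ l * (lam⁻¹ * exp (-t)) ^ (j - l) =
      lam ^ (2 * (l : ℤ) - j) * exp (((2 * (l : ℤ) - j : ℤ) : ℂ) * t) := by
  have hexp : (2 * (l : ℤ) - j) = l - ((j - l : ℕ) : ℤ) := by
    push_cast [Nat.cast_sub hl]; ring
  have harg : (((l : ℤ) - ((j - l : ℕ) : ℤ) : ℤ) : ℂ) * t = l * t + (j - l : ℕ) * (-t) := by
    push_cast; ring
  rw [hexp, harg, zpow_sub₀ hlam, zpow_natCast, zpow_natCast, exp_add, exp_nat_mul,
    exp_nat_mul, mul_pow, mul_pow, inv_pow, div_eq_mul_inv]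
  ring

theorem hasEGF_mul_exp_add_inv_mul_exp_neg_pow (hlam : lam ≠ 0) (j : ℕ) :
    HasEGF
      (fun n => ∑ l ∈ range (j + 1),
        (j.choose l : ℂ) * ((2 * (l : ℤ) - j : ℤ) : ℂ) ^ n * lam ^ (2 * (l : ℤ) - j))
      (fun t => (lam * exp t + lam⁻¹ * exp (-t)) ^ j) := by
  have h := HasEGF.sum (range (j + 1)) fun l _ =>
    (hasEGF_pow_exp_mul ((2 * (l : ℤ) - j : ℤ) : ℂ)).const_mul
      ((j.choose l : ℂ) * lam ^ (2 * (l : ℤ) - j))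
  convert h using 2 with n t
  · exact sum_congr rfl fun l _ => by ring
  · rw [add_pow]
    refine sum_congr rfl fun l hl => ?_
    rw [mul_exp_pow_mul_inv_mul_exp_neg_pow hlam t (Nat.lt_succ_iff.mp (mem_range.mp hl))]
    ring

theorem hasEGF_factorial_mul_y2 (hlam : lam ≠ 0) (k : ℕ) :
    HasEGF (fun n => ((2 * k).factorial : ℂ) * y2 n k lam)
      (fun t => (lam * exp t + lam⁻¹ * exp (-t) + 2) ^ k) := by
  have h := HasEGF.sum (range (k + 1)) fun j _ =>
    (hasEGF_mul_exp_add_inv_mul_exp_neg_pow hlam j).const_mul ((k.choose j : ℂ) * 2 ^ (k - j))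
  have hk : ((2 * k).factorial : ℂ) ≠ 0 := by exact_mod_cast (2 * k).factorial_ne_zero
  convert h using 2 with n t
  · rw [y2, mul_inv_cancel_left₀ hk]
  · rw [add_pow]
    exact sum_congr rfl fun j _ => by ring

end Lambda

theorem stmt18 (lam : ℂ) (hlam : lam ≠ 0) (W : ℕ → ℕ → ℂ)
    (hW : ∀ k : ℕ, ∀ t : ℂ, HasSum (fun n => W n k * t ^ n / n.factorial)
      ((lam * Complex.exp t + lam⁻¹ * Complex.exp (-t) + 2) ^ k)) :
    ∀ n k : ℕ, W n k = ((2 * k).factorial : ℂ) * y2 n k lam := by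
  intro n k
  have hWk : HasEGF (fun n => W n k) (fun t => (lam * exp t + lam⁻¹ * exp (-t) + 2) ^ k) :=
    hW k
  exact congrFun (hWk.unique (hasEGF_factorial_mul_y2 hlam k)) n
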